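/- Drift positivity: let r* ∈ A be lex-optimal, let r ∈ ℝ^N with r ≥ 0, and let J ∈ A_0 satisfy Σ_{i ∈ ∪_{k=1}^{n} L_k(r)} J_i = f(∪_{k=1}^{n} L_k(r)) for every n = 1,…,K(r), where L_k(r) are the level sets of the ratios r_i/D_i. Then Σ_{i∈N} (1/D_i)(r*_i − r_i)(J_i − r_i) ≥ Σ_{i∈N} (1/D_i)(r*_i − r_i)²; in particular, for every ε > 0 and every such pair (r, J) with ‖r − r*‖ ≥ ε, the left-hand side is at least ε² · min_{i∈N}(1/D_i) > 0. -/

import Mathlib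

open Finset
open scoped Classical

noncomputable section

namespace SharingEcon

variable {V : Type*} [Fintype V] [DecidableEq V]

/-- The set of neighbors of a set of nodes: `N_S = ⋃ i ∈ S, N_i`. -/
def nbrs (G : SimpleGraph V) [DecidableRel G.Adj] (S : Finset V) : Finset V :=
  S.biUnion fun i => G.neighborFinset i

/-- The set function `f(S) = ∑_{j ∈ N_S} D_j`. -/
def fS (G : SimpleGraph V) [DecidableRel G.Adj] (D : V → ℝ) (S : Finset V) : ℝ :=
  ∑ j ∈ nbrs G S, D j

/-- The polymatroid polyhedron `A` of a set function `f`. -/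
def polyA (f : Finset V → ℝ) : Set (V → ℝ) :=
  {r | (∀ i, 0 ≤ r i) ∧ ∀ S : Finset V, ∑ i ∈ S, r i ≤ f S}

/-- The base `A₀` of the polymatroid. -/
def polyBase (f : Finset V → ℝ) : Set (V → ℝ) :=
  {r | r ∈ polyA f ∧ ∑ i, r i = f Finset.univ}

/-- The coordinates of a vector sorted in nondecreasing order. -/
def sortedVec (x : V → ℝ) : List ℝ :=
  (Finset.univ.val.map x).sort (· ≤ ·)

/-- `x` is lexicographically at least `y` (comparing sorted coordinate vectors). -/
def lexGE (x y : V → ℝ) : Prop :=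
  sortedVec x = sortedVec y ∨
    ∃ k : ℕ, (∀ j < k, (sortedVec x).getD j 0 = (sortedVec y).getD j 0) ∧
      (sortedVec y).getD k 0 < (sortedVec x).getD k 0

/-- `r` is lexicographically optimal in `A` for the sharing-ratio vectors `(r i / D i)`. -/
def LexOptimal (A : Set (V → ℝ)) (D : V → ℝ) (r : V → ℝ) : Prop :=
  r ∈ A ∧ ∀ r' ∈ A, lexGE (fun i => r i / D i) (fun i => r' i / D i)

/-- The sharing ratio of node `i`. -/
def ratio (D r : V → ℝ) (i : V) : ℝ := r i / D i

/-- The distinct values of the sharing ratios, sorted increasingly. -/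
def vals (D r : V → ℝ) : List ℝ :=
  (Finset.univ.image (ratio D r)).sort (· ≤ ·)

/-- The number `K(r)` of distinct sharing-ratio values. -/
def numLevels (D r : V → ℝ) : ℕ := (vals D r).length

/-- The `k`-th smallest distinct ratio value `v_k(r)` (1-indexed). -/
def v (D r : V → ℝ) (k : ℕ) : ℝ := (vals D r).getD (k - 1) 0

/-- The `k`-th level set `L_k(r)` (1-indexed). -/
def level (D r : V → ℝ) (k : ℕ) : Finset V :=
  Finset.univ.filter fun i => ratio D r i = v D r k

end SharingEcon

/-!
The drift minus the quadratic term equals `∑ ρ(r*)ᵢ (Jᵢ - r*ᵢ) + ∑ ρ(r)ᵢ (r*ᵢ - Jᵢ)`, and both sums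
are nonnegative by Abel summation: in each, the weights are the ratios of one vector, which is
tight on every sublevel set of its own ratios, while the other vector is feasible with the same
total. For `J` this tightness is the level-set hypothesis. For `r*`, every `i` of a sublevel set
`P` lies in a tight subset of `P`: otherwise raising `r*ᵢ` and lowering every coordinate outside
`P` by a small `δ` stays in the polymatroid and strictly increases the sorted ratio vector. Tight
sets are closed under union by submodularity, so `P` itself is tight.
-/

namespace List

variable {α : Type*} [LinearOrder α]

theorem Pairwise.getD_le_iff_lt_countP {l : List α} (hl : l.Pairwise (· ≤ ·)) (d : α) {j : ℕ}
    (hj : j < l.length) (c : α) : l.getD j d ≤ c ↔ j < l.countP (· ≤ c) := by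
  induction l generalizing j with
  | nil => simp at hj
  | cons a l ih =>
    obtain ⟨ha, hl⟩ := pairwise_cons.mp hl
    by_cases hac : a ≤ c
    · cases j with
      | zero => simp [hac]
      | succ j =>
        simp only [getD_cons_succ, countP_cons, ih hl (Nat.lt_of_succ_lt_succ hj)]
        simp [hac]
    · have hnone : l.countP (· ≤ c) = 0 :=
        countP_eq_zero.mpr fun b hb hbc => hac ((ha b hb).trans (by simpa using hbc))
      cases j with
      | zero => simp [hac, hnone]
      | succ j =>
        simp only [getD_cons_succ, countP_cons, ih hl (Nat.lt_of_succ_lt_succ hj)]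
        simp [hac, hnone]

theorem Pairwise.getD_le_getD_of_countP_le {s t : List α} (hs : s.Pairwise (· ≤ ·))
    (ht : t.Pairwise (· ≤ ·)) (d : α) {c₀ : α}
    (hst : ∀ c < c₀, t.countP (· ≤ c) ≤ s.countP (· ≤ c)) {j : ℕ} (hjs : j < s.length)
    (hjt : j < t.length) (hsj : s.getD j d ≤ c₀) : s.getD j d ≤ t.getD j d := by
  by_contra! hlt
  have hjt' : j < t.countP (· ≤ t.getD j d) := (ht.getD_le_iff_lt_countP d hjt _).mp le_rfl
  have := (hs.getD_le_iff_lt_countP d hjs _).mpr (hjt'.trans_le (hst _ (hlt.trans_le hsj)))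
  exact hlt.not_ge this

end List

namespace Finset

variable {ι R : Type*} [CommRing R] [LinearOrder R] [IsStrictOrderedRing R]

theorem le_sum_mul_of_sum_filter_le_nonpos [DecidableEq ι] (w d : ι → R) (s : Finset ι) {m : R}
    (hm : ∀ i ∈ s, w i ≤ m) (hd : ∀ c < m, ∑ i ∈ s with w i ≤ c, d i ≤ 0) :
    m * ∑ i ∈ s, d i ≤ ∑ i ∈ s, w i * d i := by
  induction s using Finset.induction_on_max_value w generalizing m with
  | empty => simp
  | insert a s ha hmax ih =>
    have hma : w a ≤ m := hm a (mem_insert_self a s)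
    have hs : w a * ∑ i ∈ s, d i ≤ ∑ i ∈ s, w i * d i := by
      refine ih hmax fun c hc => ?_
      have := hd c (hc.trans_le hma)
      rwa [filter_insert, if_neg hc.not_ge] at this
    rw [sum_insert ha, sum_insert ha]
    rcases hma.lt_or_eq with hlt | rfl
    · have htot : d a + ∑ i ∈ s, d i ≤ 0 := by
        have := hd (w a) hlt
        rwa [filter_true_of_mem fun i hi => (mem_insert.mp hi).elim (·.symm ▸ le_rfl) (hmax i),
          sum_insert ha] at this
      nlinarith
    · linarith

theorem sum_mul_nonneg_of_sum_filter_le_nonpos [Fintype ι] (w d : ι → R)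
    (hd : ∀ c, ∑ i with w i ≤ c, d i ≤ 0) (hsum : ∑ i, d i = 0) : 0 ≤ ∑ i, w i * d i := by
  obtain ⟨m, hm⟩ := Finite.exists_le w
  simpa [hsum] using le_sum_mul_of_sum_filter_le_nonpos w d univ (fun i _ => hm i) fun c _ => hd c

theorem exists_pos_forall_lt {ι : Type*} (s : Finset ι) {g : ι → ℝ}
    (hg : ∀ a ∈ s, 0 < g a) : ∃ δ > 0, ∀ a ∈ s, δ < g a := by
  have h : ∀ᶠ δ in nhdsWithin (0 : ℝ) (Set.Ioi 0), ∀ a ∈ s, δ < g a :=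
    nhdsWithin_le_nhds ((Filter.eventually_all_finset s).2 fun a ha => eventually_lt_nhds (hg a ha))
  exact (eventually_mem_nhdsWithin.and h).exists

theorem sum_biUnion_union_add_inter_le {α β : Type*} [DecidableEq α] [DecidableEq β]
    (N : α → Finset β) {D : β → ℝ} (hD : ∀ j, 0 ≤ D j) (S T : Finset α) :
    ∑ j ∈ (S ∪ T).biUnion N, D j + ∑ j ∈ (S ∩ T).biUnion N, D j ≤
      ∑ j ∈ S.biUnion N, D j + ∑ j ∈ T.biUnion N, D j := by
  rw [union_biUnion, ← sum_union_inter (s₁ := S.biUnion N)]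
  gcongr
  · exact fun j _ _ => hD j
  · exact subset_inter (biUnion_subset_biUnion_of_subset_left N inter_subset_left)
      (biUnion_subset_biUnion_of_subset_left N inter_subset_right)

end Finset

namespace SharingEcon

section Lex

variable {V : Type*} [Fintype V]

theorem sortedVec_pairwise (x : V → ℝ) : (sortedVec x).Pairwise (· ≤ ·) :=
  Multiset.pairwise_sort _ _

theorem length_sortedVec (x : V → ℝ) : (sortedVec x).length = Fintype.card V := by
  simp [sortedVec]

theorem countP_sortedVec (x : V → ℝ) (c : ℝ) :
    (sortedVec x).countP (· ≤ c) = #{i | x i ≤ c} := by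
  rw [← Multiset.coe_countP, sortedVec, Multiset.sort_eq, Multiset.countP_map]
  rfl

theorem not_lexGE_of_card_filter {x y : V → ℝ} {c₀ : ℝ}
    (heq : ∀ c < c₀, #{i | y i ≤ c} = #{i | x i ≤ c})
    (hlt : #{i | y i ≤ c₀} < #{i | x i ≤ c₀}) : ¬ lexGE x y := by
  set s := sortedVec x
  set t := sortedVec y
  have hs := sortedVec_pairwise x
  have ht := sortedVec_pairwise y
  simp only [← countP_sortedVec] at heq hlt
  -- `m` is the first index at which the sorted vectors differ, with `s[m] ≤ c₀ < t[m]`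
  set m := t.countP (· ≤ c₀)
  have hlen : s.length = t.length := by simp [s, t, length_sortedVec]
  have hms : m < s.length := hlt.trans_le List.countP_le_length
  have hsm : s.getD m 0 ≤ c₀ := (hs.getD_le_iff_lt_countP 0 hms c₀).mpr hlt
  have htm : c₀ < t.getD m 0 := not_le.mp fun h =>
    (lt_irrefl m) ((ht.getD_le_iff_lt_countP 0 (hlen ▸ hms) c₀).mp h)
  have hprefix : ∀ j < m, s.getD j 0 = t.getD j 0 := by
    intro j hj
    have hjs : j < s.length := hj.trans hms
    have hjt : j < t.length := hlen ▸ hjs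
    have hsj := (hs.getD_le_iff_lt_countP 0 hjs c₀).mpr (hj.trans hlt)
    have htj := (ht.getD_le_iff_lt_countP 0 hjt c₀).mpr hj
    exact le_antisymm (hs.getD_le_getD_of_countP_le ht 0 (fun c hc => (heq c hc).le) hjs hjt hsj)
      (ht.getD_le_getD_of_countP_le hs 0 (fun c hc => (heq c hc).ge) hjt hjs htj)
  rintro (hst | ⟨k, hk, hlt'⟩)
  · exact hlt.ne (by simp only [m, t, ← hst])
  · rcases lt_trichotomy k m with hkm | rfl | hkm
    · exact hlt'.ne' (hprefix k hkm)
    · linarith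
    · linarith [hk m hkm]

theorem not_lexGE_of_raise {x y : V → ℝ} {i : V} (hi : x i < y i)
    (hlow : ∀ k ≠ i, x k ≤ x i → y k = x k) (hhigh : ∀ k, x i < x k → x i < y k) :
    ¬ lexGE x y := by
  have hup : ∀ k, ¬(k ≠ i ∧ x k ≤ x i) → x i ≤ x k ∧ x i < y k := by
    intro k hk
    by_cases hki : k = i
    · subst hki; exact ⟨le_rfl, hi⟩
    · have hxk : x i < x k := not_le.mp fun h => hk ⟨hki, h⟩
      exact ⟨hxk.le, hhigh k hxk⟩
  refine not_lexGE_of_card_filter (c₀ := x i) (fun c hc => ?_) (card_lt_card ?_)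
  · congr 1
    ext k
    simp only [mem_filter, mem_univ, true_and]
    by_cases hk : k ≠ i ∧ x k ≤ x i
    · rw [hlow k hk.1 hk.2]
    · obtain ⟨hxk, hyk⟩ := hup k hk
      constructor <;> intro h <;> linarith
  · refine (ssubset_iff_of_subset fun k => ?_).mpr ⟨i, by simp, by simpa using hi⟩
    simp only [mem_filter, mem_univ, true_and]
    intro hyk
    by_cases hk : k ≠ i ∧ x k ≤ x i
    · rwa [← hlow k hk.1 hk.2]
    · exact absurd hyk (not_le.mpr (hup k hk).2)

end Lex

section Polymatroid

variable {V : Type*} {f : Finset V → ℝ}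

def IsSubmodular [DecidableEq V] (f : Finset V → ℝ) : Prop :=
  ∀ S T, f (S ∪ T) + f (S ∩ T) ≤ f S + f T

def IsTight (f : Finset V → ℝ) (r : V → ℝ) (S : Finset V) : Prop :=
  ∑ i ∈ S, r i = f S

theorem IsTight.union [DecidableEq V] (hf : IsSubmodular f) {r : V → ℝ} (hr : r ∈ polyA f)
    {S T : Finset V} (hS : IsTight f r S) (hT : IsTight f r T) : IsTight f r (S ∪ T) := by
  have hunion := hr.2 (S ∪ T)
  have hinter := hr.2 (S ∩ T)
  have hsplit : ∑ i ∈ S ∪ T, r i + ∑ i ∈ S ∩ T, r i = ∑ i ∈ S, r i + ∑ i ∈ T, r i :=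
    sum_union_inter
  unfold IsTight at *
  linarith [hf S T]

theorem isTight_biUnion [DecidableEq V] (hf : IsSubmodular f) (hf0 : f ∅ = 0) {r : V → ℝ}
    (hr : r ∈ polyA f) {ι : Type*} [DecidableEq ι] (s : Finset ι) {g : ι → Finset V}
    (hg : ∀ a ∈ s, IsTight f r (g a)) : IsTight f r (s.biUnion g) := by
  induction s using Finset.induction_on with
  | empty => simp [IsTight, hf0]
  | insert a s _ ih =>
    rw [biUnion_insert]
    exact (hg a (mem_insert_self a s)).union hf hr (ih fun b hb => hg b (mem_insert_of_mem hb))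

def transfer [DecidableEq V] (P : Finset V) (i : V) (δ : ℝ) (r : V → ℝ) : V → ℝ :=
  fun k => if k = i then r k + δ else if k ∈ P then r k else r k - δ

theorem transfer_le [DecidableEq V] {P : Finset V} {i : V} {δ : ℝ} (hδ : 0 ≤ δ) (r : V → ℝ)
    (k : V) : transfer P i δ r k ≤ r k + (Pi.single i δ : V → ℝ) k := by
  by_cases hki : k = i
  · subst hki; simp [transfer]
  · simp only [transfer, hki, if_false, Pi.single_apply]; split_ifs <;> linarith

theorem transfer_le_of_notMem [DecidableEq V] {P : Finset V} {i k₀ : V} (hi : i ∈ P)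
    (hk₀ : k₀ ∉ P) {δ : ℝ} (hδ : 0 ≤ δ) (r : V → ℝ) (k : V) :
    transfer P i δ r k ≤ r k + (Pi.single i δ : V → ℝ) k - (Pi.single k₀ δ : V → ℝ) k := by
  by_cases hk : k = k₀
  · subst hk
    have hki : k ≠ i := fun h => hk₀ (h ▸ hi)
    simp [transfer, hki, hk₀]
  · simpa [hk] using transfer_le hδ r k

theorem transfer_mem_polyA [DecidableEq V] {r : V → ℝ} (hr : r ∈ polyA f) {P : Finset V}
    {i : V} (hi : i ∈ P) {δ : ℝ} (hδ : 0 ≤ δ) (hout : ∀ k ∉ P, δ ≤ r k)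
    (hslack : ∀ S, i ∈ S → S ⊆ P → ∑ k ∈ S, r k + δ ≤ f S) : transfer P i δ r ∈ polyA f := by
  refine ⟨fun k => ?_, fun S => ?_⟩
  · simp only [transfer]
    split_ifs with hki hkP
    · linarith [hr.1 k]
    · exact hr.1 k
    · linarith [hout k hkP]
  by_cases hiS : i ∈ S
  · by_cases hSP : S ⊆ P
    · calc ∑ k ∈ S, transfer P i δ r k ≤ ∑ k ∈ S, (r k + (Pi.single i δ : V → ℝ) k) :=
            sum_le_sum fun k _ => transfer_le hδ r k
        _ = ∑ k ∈ S, r k + δ := by simp [sum_add_distrib, hiS]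
        _ ≤ f S := hslack S hiS hSP
    · obtain ⟨k₀, hk₀S, hk₀P⟩ := not_subset.mp hSP
      calc ∑ k ∈ S, transfer P i δ r k
          ≤ ∑ k ∈ S, (r k + (Pi.single i δ : V → ℝ) k - (Pi.single k₀ δ : V → ℝ) k) :=
            sum_le_sum fun k _ => transfer_le_of_notMem hi hk₀P hδ r k
        _ = ∑ k ∈ S, r k := by simp [sum_add_distrib, sum_sub_distrib, hiS, hk₀S]
        _ ≤ f S := hr.2 S
  · calc ∑ k ∈ S, transfer P i δ r k ≤ ∑ k ∈ S, (r k + (Pi.single i δ : V → ℝ) k) :=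
          sum_le_sum fun k _ => transfer_le hδ r k
      _ = ∑ k ∈ S, r k := by simp [sum_add_distrib, hiS]
      _ ≤ f S := hr.2 S

theorem not_lexGE_ratio_transfer [Fintype V] [DecidableEq V] {D r : V → ℝ} (hD : ∀ i, 0 < D i)
    {P : Finset V} {i : V} (hi : i ∈ P) (hP : ∀ k ∉ P, ratio D r i < ratio D r k) {δ : ℝ}
    (hδ : 0 < δ) (hgap : ∀ k ∉ P, ratio D r i < (r k - δ) / D k) :
    ¬ lexGE (ratio D r) (ratio D (transfer P i δ r)) := by
  refine not_lexGE_of_raise (i := i) ?_ (fun k hki hk => ?_) fun k hk => ?_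
  · simp only [ratio, transfer, if_true]
    exact div_lt_div_of_pos_right (by linarith) (hD i)
  · have hkP : k ∈ P := by_contra fun hkP => (hP k hkP).not_ge hk
    simp [ratio, transfer, hki, hkP]
  · by_cases hkP : k ∈ P
    · have hki : k ≠ i := by rintro rfl; exact hk.false
      simpa [ratio, transfer, hki, hkP] using hk
    · have hki : k ≠ i := fun h => hkP (h ▸ hi)
      simpa [ratio, transfer, hki, hkP] using hgap k hkP

theorem LexOptimal.exists_isTight_mem_subset [Fintype V] [DecidableEq V] {D r : V → ℝ}
    (hD : ∀ i, 0 < D i) (hlex : LexOptimal (polyA f) D r) {P : Finset V} {i : V} (hi : i ∈ P)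
    (hP : ∀ k ∉ P, ratio D r i < ratio D r k) : ∃ S, IsTight f r S ∧ i ∈ S ∧ S ⊆ P := by
  by_contra! hslack
  obtain ⟨δ₁, hδ₁, hslack₁⟩ := exists_pos_forall_lt {S | i ∈ S ∧ S ⊆ P}
    (g := fun S => f S - ∑ k ∈ S, r k) fun S hS => by
      simp only [mem_filter, mem_univ, true_and] at hS
      exact sub_pos.2 ((hlex.1.2 S).lt_of_ne fun h => hslack S h hS.1 hS.2)
  obtain ⟨δ₂, hδ₂, hgap₂⟩ := exists_pos_forall_lt Pᶜ
    (g := fun k => r k - ratio D r i * D k) fun k hk => by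
      have := hP k (mem_compl.mp hk)
      rw [ratio, ratio, lt_div_iff₀ (hD k)] at this
      exact sub_pos.2 this
  set δ := min δ₁ δ₂
  have hδδ₁ : δ ≤ δ₁ := min_le_left δ₁ δ₂
  have hδδ₂ : δ ≤ δ₂ := min_le_right δ₁ δ₂
  have hgap : ∀ k ∉ P, ratio D r i < (r k - δ) / D k := fun k hk => by
    have := hgap₂ k (mem_compl.mpr hk)
    rw [lt_div_iff₀ (hD k)]
    linarith
  have hratio : ∀ k, 0 ≤ ratio D r i * D k := fun k =>
    mul_nonneg (div_nonneg (hlex.1.1 i) (hD i).le) (hD k).le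
  refine not_lexGE_ratio_transfer hD hi hP (lt_min hδ₁ hδ₂) hgap (hlex.2 _ ?_)
  refine transfer_mem_polyA hlex.1 hi (lt_min hδ₁ hδ₂).le (fun k hk => ?_) fun S hiS hSP => ?_
  · linarith [hgap₂ k (mem_compl.mpr hk), hratio k]
  · linarith [hslack₁ S (by simp [hiS, hSP])]

theorem LexOptimal.isTight_of_ratio_lt [Fintype V] [DecidableEq V] (hf : IsSubmodular f)
    (hf0 : f ∅ = 0) {D r : V → ℝ} (hD : ∀ i, 0 < D i) (hlex : LexOptimal (polyA f) D r)
    {P : Finset V} (hP : ∀ i ∈ P, ∀ k ∉ P, ratio D r i < ratio D r k) : IsTight f r P := by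
  have hcover : ∀ i, ∃ S, IsTight f r S ∧ S ⊆ P ∧ (i ∈ P → i ∈ S) := fun i => by
    by_cases hi : i ∈ P
    · obtain ⟨S, hS, hiS, hSP⟩ := hlex.exists_isTight_mem_subset hD hi (hP i hi)
      exact ⟨S, hS, hSP, fun _ => hiS⟩
    · exact ⟨∅, by simp [IsTight, hf0], empty_subset P, (absurd · hi)⟩
  choose S hS hSP hiS using hcover
  have hPS : P = univ.biUnion S := subset_antisymm
    (fun i hi => mem_biUnion.2 ⟨i, mem_univ i, hiS i hi⟩) (biUnion_subset.2 fun i _ => hSP i)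
  rw [hPS]
  exact isTight_biUnion hf hf0 hlex.1 univ fun i _ => hS i

theorem LexOptimal.isTight_filter_ratio_le [Fintype V] [DecidableEq V] (hf : IsSubmodular f)
    (hf0 : f ∅ = 0) {D r : V → ℝ} (hD : ∀ i, 0 < D i) (hlex : LexOptimal (polyA f) D r)
    (c : ℝ) : IsTight f r {i | ratio D r i ≤ c} :=
  hlex.isTight_of_ratio_lt hf hf0 hD fun i hi k hk => by
    simp only [mem_filter, mem_univ, true_and, not_le] at hi hk
    exact hi.trans_lt hk

theorem LexOptimal.isTight_univ [Fintype V] [DecidableEq V] (hf : IsSubmodular f)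
    (hf0 : f ∅ = 0) {D r : V → ℝ} (hD : ∀ i, 0 < D i) (hlex : LexOptimal (polyA f) D r) :
    IsTight f r univ :=
  hlex.isTight_of_ratio_lt hf hf0 hD fun _ _ k hk => absurd (mem_univ k) hk

theorem filter_ratio_le_eq_biUnion_level [Fintype V] [DecidableEq V] (D r : V → ℝ) (c : ℝ) :
    ({i | ratio D r i ≤ c} : Finset V) =
      (Icc 1 ((vals D r).countP (· ≤ c))).biUnion (level D r) := by
  have hsorted : (vals D r).Pairwise (· ≤ ·) := pairwise_sort _ _
  have hlen : (vals D r).countP (· ≤ c) ≤ (vals D r).length := List.countP_le_length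
  ext i
  simp only [level, mem_filter, mem_univ, true_and, mem_biUnion, mem_Icc]
  constructor
  · intro hic
    have hmem : ratio D r i ∈ vals D r := (mem_sort _).mpr (mem_image_of_mem _ (mem_univ i))
    obtain ⟨k, hk, hki⟩ := List.mem_iff_getElem.mp hmem
    have hgetD : (vals D r).getD k 0 = ratio D r i := by rw [List.getD_eq_getElem _ _ hk, hki]
    refine ⟨k + 1, ⟨by omega, ?_⟩, by rw [v, Nat.add_sub_cancel, hgetD]⟩
    exact (hsorted.getD_le_iff_lt_countP 0 hk c).mp (hgetD ▸ hic)
  · rintro ⟨m, ⟨hm1, hmn⟩, hi⟩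
    rw [hi, v, hsorted.getD_le_iff_lt_countP 0 (by omega)]
    omega

theorem isTight_filter_ratio_le_of_levels [Fintype V] [DecidableEq V] (hf0 : f ∅ = 0)
    {D r J : V → ℝ}
    (hJ : ∀ n : ℕ, 1 ≤ n → n ≤ numLevels D r → IsTight f J ((Icc 1 n).biUnion (level D r)))
    (c : ℝ) : IsTight f J {i | ratio D r i ≤ c} := by
  rw [filter_ratio_le_eq_biUnion_level]
  rcases Nat.eq_zero_or_pos ((vals D r).countP (· ≤ c)) with h0 | hpos
  · simp [h0, IsTight, hf0]
  · exact hJ _ hpos List.countP_le_length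

theorem sum_mul_sub_nonneg_of_isTight [Fintype V] {x y w : V → ℝ} (hx : x ∈ polyA f)
    (hy : ∀ c, IsTight f y {i | w i ≤ c}) (hxy : ∑ i, x i = ∑ i, y i) :
    0 ≤ ∑ i, w i * (x i - y i) := by
  refine sum_mul_nonneg_of_sum_filter_le_nonpos w _ (fun c => ?_) (by simp [sum_sub_distrib, hxy])
  rw [sum_sub_distrib, hy c]
  linarith [hx.2 {i | w i ≤ c}]

theorem fS_isSubmodular [Fintype V] [DecidableEq V] (G : SimpleGraph V) [DecidableRel G.Adj]
    {D : V → ℝ} (hD : ∀ i, 0 ≤ D i) : IsSubmodular (fS G D) :=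
  sum_biUnion_union_add_inter_le _ hD

theorem fS_empty [Fintype V] [DecidableEq V] (G : SimpleGraph V) [DecidableRel G.Adj]
    (D : V → ℝ) : fS G D ∅ = 0 := by
  simp [fS, nbrs]

end Polymatroid

theorem sq_mul_inf'_le_sum_mul_sq {V : Type*} [Fintype V] [Nonempty V] {a b : V → ℝ}
    (ha : ∀ i, 0 ≤ a i) {ε : ℝ} (hε : 0 ≤ ε) (hεb : ε ≤ √(∑ i, b i ^ 2)) :
    ε ^ 2 * univ.inf' univ_nonempty a ≤ ∑ i, a i * b i ^ 2 := by
  have hm : 0 ≤ univ.inf' univ_nonempty a := le_inf' _ _ fun i _ => ha i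
  calc ε ^ 2 * univ.inf' univ_nonempty a ≤ (∑ i, b i ^ 2) * univ.inf' univ_nonempty a := by
        gcongr
        exact (Real.le_sqrt hε (by positivity)).1 hεb
    _ = ∑ i, univ.inf' univ_nonempty a * b i ^ 2 := by rw [sum_mul]; simp_rw [mul_comm]
    _ ≤ ∑ i, a i * b i ^ 2 := sum_le_sum fun i _ => by gcongr; exact inf'_le _ (mem_univ i)

theorem drift_positivity_general {V : Type*} [Fintype V] [DecidableEq V] [Nonempty V]
    (G : SimpleGraph V) [DecidableRel G.Adj]
    (D : V → ℝ) (hD : ∀ i, 0 < D i)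
    (rstar : V → ℝ) (hlex : LexOptimal (polyA (fS G D)) D rstar)
    (r : V → ℝ)
    (J : V → ℝ) (hJbase : J ∈ polyBase (fS G D))
    (hJ : ∀ n : ℕ, 1 ≤ n → n ≤ numLevels D r →
      ∑ i ∈ (Finset.Icc 1 n).biUnion (level D r), J i =
        fS G D ((Finset.Icc 1 n).biUnion (level D r))) :
    (∑ i, (1 / D i) * (rstar i - r i) ^ 2 ≤
        ∑ i, (1 / D i) * (rstar i - r i) * (J i - r i)) ∧
    ∀ ε : ℝ, 0 < ε → ε ≤ Real.sqrt (∑ i, (r i - rstar i) ^ 2) →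
      (ε ^ 2 * (Finset.univ.inf' Finset.univ_nonempty fun i => 1 / D i) ≤
          ∑ i, (1 / D i) * (rstar i - r i) * (J i - r i)) ∧
        0 < ε ^ 2 * (Finset.univ.inf' Finset.univ_nonempty fun i => 1 / D i) := by
  have hsub := fS_isSubmodular G fun i => (hD i).le
  have hf0 := fS_empty G D
  have hsum : ∑ i, J i = ∑ i, rstar i := hJbase.2.trans (hlex.isTight_univ hsub hf0 hD).symm
  have hstar :=
    sum_mul_sub_nonneg_of_isTight hJbase.1 (hlex.isTight_filter_ratio_le hsub hf0 hD) hsum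
  have hlevels := sum_mul_sub_nonneg_of_isTight hlex.1 (isTight_filter_ratio_le_of_levels hf0 hJ)
    hsum.symm
  have hdrift : ∑ i, (1 / D i) * (rstar i - r i) ^ 2 ≤
      ∑ i, (1 / D i) * (rstar i - r i) * (J i - r i) := by
    have hsplit : ∑ i, (1 / D i) * (rstar i - r i) * (J i - r i) -
        ∑ i, (1 / D i) * (rstar i - r i) ^ 2 =
        ∑ i, ratio D rstar i * (J i - rstar i) + ∑ i, ratio D r i * (rstar i - J i) := by
      rw [← sum_sub_distrib, ← sum_add_distrib]
      refine sum_congr rfl fun i _ => ?_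
      simp only [ratio]
      field_simp
      ring
    linarith
  refine ⟨hdrift, fun ε hε hεle => ⟨?_, ?_⟩⟩
  · simp_rw [sub_sq_comm (rstar _)] at hdrift
    exact (sq_mul_inf'_le_sum_mul_sq (fun i => (one_div_pos.2 (hD i)).le) hε.le hεle).trans hdrift
  · exact mul_pos (pow_pos hε 2) ((lt_inf'_iff _).2 fun i _ => one_div_pos.2 (hD i))

/-- drift positivity: with `r*` lex-optimal, `r ≥ 0`, and `J ∈ A₀` satisfying
the level-set equalities for `r`, the drift satisfies
`Σ_i (1/D_i)(r*_i − r_i)(J_i − r_i) ≥ Σ_i (1/D_i)(r*_i − r_i)²`; in particular if the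
(Euclidean) distance `‖r − r*‖` is at least `ε > 0` then the drift is at least
`ε² · min_i (1/D_i) > 0`. -/
theorem drift_positivity {V : Type*} [Fintype V] [DecidableEq V] [Nonempty V]
    (G : SimpleGraph V) [DecidableRel G.Adj]
    (hconn : G.Connected) (hniso : ∀ i, (G.neighborFinset i).Nonempty)
    (D : V → ℝ) (hD : ∀ i, 0 < D i)
    (rstar : V → ℝ) (hlex : LexOptimal (polyA (fS G D)) D rstar)
    (r : V → ℝ) (hrpos : ∀ i, 0 ≤ r i)
    (J : V → ℝ) (hJbase : J ∈ polyBase (fS G D))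
    (hJ : ∀ n : ℕ, 1 ≤ n → n ≤ numLevels D r →
      ∑ i ∈ (Finset.Icc 1 n).biUnion (level D r), J i =
        fS G D ((Finset.Icc 1 n).biUnion (level D r))) :
    (∑ i, (1 / D i) * (rstar i - r i) ^ 2 ≤
        ∑ i, (1 / D i) * (rstar i - r i) * (J i - r i)) ∧
    ∀ ε : ℝ, 0 < ε → ε ≤ Real.sqrt (∑ i, (r i - rstar i) ^ 2) →
      (ε ^ 2 * (Finset.univ.inf' Finset.univ_nonempty fun i => 1 / D i) ≤
          ∑ i, (1 / D i) * (rstar i - r i) * (J i - r i)) ∧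
        0 < ε ^ 2 * (Finset.univ.inf' Finset.univ_nonempty fun i => 1 / D i) :=
  drift_positivity_general G D hD rstar hlex r J hJbase hJ

end SharingEcon
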